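/- (Tangency of the constrained dynamics vector field.) Let $C^a : \mathbb{R}^n \times \mathbb{R}^n \to \mathbb{R}$ be smooth with $[\partial C^a/\partial \dot q^i]$ of rank $r$ on the zero set, let $g(q)$ be symmetric positive-definite, and define the vector field $\mathbf{D}$ on $\mathbb{R}^n \times \mathbb{R}^n$ by $\dot q^i{}' = \dot q^i$, $\dot{\dot q}^i = (g^{ij} - \pi^{ij})L_j - \dot q^j\,\partial_j C^a\, C_a^i$, with $\pi^{ij} = G_{ab}C^{ai}C^{bj}$, $C^{ai} = g^{ij}C^a_j$, $C_a^i = G_{ab}C^{bi}$, $G^{ab} = g^{ij}C^a_iC^b_j$, $[G_{ab}] = [G^{ab}]^{-1}$, and $L_j$ arbitrary smooth. Then $\mathbf{D}$ is tangent to the submanifold $C = \{C^a(q,\dot q) = 0,\ a=1,\dots,r\}$: along $\mathbf{D}$, the derivative of each $C^a$ vanishes on $C$, i.e., $\dot q^i\,\partial_i C^a + D^i\, C^a_i = 0$ where $D^i$ is the vertical component of $\mathbf{D}$. -/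

import Mathlib

open Matrix

theorem stmt_15 (n r : ℕ)
    (C : Fin r → (Fin n → ℝ) → (Fin n → ℝ) → ℝ)
    (hC : ∀ a, ContDiff ℝ (⊤ : ℕ∞) (fun p : (Fin n → ℝ) × (Fin n → ℝ) => C a p.1 p.2))
    (g : (Fin n → ℝ) → Matrix (Fin n) (Fin n) ℝ) (hg : ∀ q, (g q).PosDef)
    (L : Fin n → ℝ)
    (q qd : Fin n → ℝ) (hzero : ∀ a, C a q qd = 0)
    (Cmat : Matrix (Fin r) (Fin n) ℝ)
    (hCmat : ∀ a i, Cmat a i = fderiv ℝ (C a q) qd (Pi.single i 1))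
    (hrank : Cmat.rank = r)
    (Gab : Matrix (Fin r) (Fin r) ℝ) (hGab : Gab = Cmat * (g q)⁻¹ * Cmatᵀ)
    (piM : Matrix (Fin n) (Fin n) ℝ)
    (hpi : piM = (g q)⁻¹ * Cmatᵀ * Gab⁻¹ * Cmat * (g q)⁻¹)
    (pC : Matrix (Fin r) (Fin n) ℝ)
    (hpC : ∀ a i, pC a i = fderiv ℝ (fun q' => C a q' qd) q (Pi.single i 1))
    (D : Fin n → ℝ)
    (hD : ∀ i, D i = ((g q)⁻¹ - piM).mulVec L i
      - ∑ a, (∑ j, qd j * pC a j) * (Gab⁻¹ * Cmat * (g q)⁻¹) a i) :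
    ∀ a, (∑ i, qd i * pC a i) + ∑ i, D i * Cmat a i = 0 := by
  set gi := (g q)⁻¹ with hgi_def
  have hgi : gi.PosDef := (hg q).inv
  -- Cmatᵀ.mulVec is injective
  have hinj : Function.Injective (Cmatᵀ.mulVec) := by
    have hrt : Cmatᵀ.rank = r := by rw [Matrix.rank_transpose, hrank]
    rw [show Cmatᵀ.mulVec = Cmatᵀ.mulVecLin from rfl, ← LinearMap.ker_eq_bot]
    have h1 := LinearMap.finrank_range_add_finrank_ker (Cmatᵀ.mulVecLin)
    rw [Module.finrank_pi, Fintype.card_fin] at h1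
    have h2 : Module.finrank ℝ (LinearMap.range Cmatᵀ.mulVecLin) = r := hrt
    have h3 : Module.finrank ℝ (LinearMap.ker Cmatᵀ.mulVecLin) = 0 := by omega
    exact Submodule.finrank_eq_zero.mp h3
  have hct : Cmatᵀᴴ = Cmat := by
    rw [Matrix.conjTranspose_eq_transpose_of_trivial, Matrix.transpose_transpose]
  -- Gab is positive definite
  have hGabPD : Gab.PosDef := by
    refine Matrix.PosDef.of_dotProduct_mulVec_pos ?_ ?_
    · rw [hGab, ← hct]
      exact Matrix.isHermitian_conjTranspose_mul_mul Cmatᵀ hgi.isHermitian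
    · intro x hx
      have hy : Cmatᵀ *ᵥ x ≠ 0 := fun h => hx (hinj (by simpa using h))
      have := hgi.dotProduct_mulVec_pos hy
      rw [hGab, ← hct]
      simpa only [star_mulVec, dotProduct_mulVec, vecMul_vecMul, hct] using this
  have hdet : IsUnit Gab.det := hGabPD.det_pos.ne'.isUnit
  set M := Gab⁻¹ * Cmat * gi with hM
  have h2 : M * Cmatᵀ = 1 := by
    calc M * Cmatᵀ = Gab⁻¹ * (Cmat * gi * Cmatᵀ) := by
          rw [hM]; simp only [Matrix.mul_assoc]
      _ = Gab⁻¹ * Gab := by rw [← hGab]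
      _ = 1 := Matrix.nonsing_inv_mul _ hdet
  have h1 : Cmat * (gi - piM) = 0 := by
    rw [Matrix.mul_sub, hpi]
    have : Cmat * (gi * Cmatᵀ * Gab⁻¹ * Cmat * gi) = Cmat * gi := by
      calc Cmat * (gi * Cmatᵀ * Gab⁻¹ * Cmat * gi)
          = (Cmat * gi * Cmatᵀ) * Gab⁻¹ * (Cmat * gi) := by
            simp only [Matrix.mul_assoc]
        _ = Gab * Gab⁻¹ * (Cmat * gi) := by rw [← hGab]
        _ = Cmat * gi := by rw [Matrix.mul_nonsing_inv _ hdet, Matrix.one_mul]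
    rw [this, sub_self]
  intro a
  have key1 : ∑ i, ((gi - piM) *ᵥ L) i * Cmat a i = 0 := by
    have : ∑ i, Cmat a i * ((gi - piM) *ᵥ L) i = ((Cmat * (gi - piM)) *ᵥ L) a := by
      rw [← Matrix.mulVec_mulVec]
      simp [Matrix.mulVec, dotProduct]
    simp only [mul_comm]
    rw [this, h1]
    simp
  have key2 : ∑ i, (∑ b, (∑ j, qd j * pC b j) * M b i) * Cmat a i
      = ∑ j, qd j * pC a j := by
    calc ∑ i, (∑ b, (∑ j, qd j * pC b j) * M b i) * Cmat a i
        = ∑ b, (∑ j, qd j * pC b j) * ∑ i, M b i * Cmat a i := by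
          simp only [Finset.sum_mul, mul_assoc, Finset.mul_sum]
          rw [Finset.sum_comm]
      _ = ∑ b, (∑ j, qd j * pC b j) * (M * Cmatᵀ) b a := by
          simp [Matrix.mul_apply, Matrix.transpose_apply]
      _ = ∑ j, qd j * pC a j := by
          rw [h2]
          simp [Matrix.one_apply]
  simp only [hD, sub_mul, Finset.sum_sub_distrib, key1, key2]
  ring
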